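/- Fix positive integers T and K, prices p_1, …, p_K ≥ 0, mean demands λ_{t,k} > 0 for t ∈ {1,…,T} and k ∈ {1,…,K}, and an initial inventory n_0 > 0. On a probability space, let P_1, …, P_T be random variables with values in {0,1,…,K} (P_t = k with k ≥ 1 means price p_k is offered at period t, and P_t = 0 means the shut-off price is offered) and let D̃_1, …, D̃_T be nonnegative random variables (satisfied demands) such that: (i) Σ_{t=1}^T D̃_t ≤ n_0 almost surely; (ii) for each t, D̃_t = 0 almost surely on the event {P_t = 0}; (iii) for each t and k, E[ D̃_t · 1(P_t = k) ] ≤ λ_{t,k} · P(P_t = k). Then the expected revenue satisfies E[ Σ_{t=1}^T Σ_{k=1}^K p_k · D̃_t · 1(P_t = k) ] ≤ OPT_LP. -/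
import Mathlib


open MeasureTheory ProbabilityTheory

/-- The expected revenue of any pricing policy with satisfied demands respecting the
inventory constraint is at most the optimal value of the LP relaxation
`LP(θ, 1, n₀)`: maximize `Σ_t Σ_k x_{t,k} p_k λ_{t,k}` subject to
`Σ_t Σ_k x_{t,k} λ_{t,k} ≤ n₀`, `Σ_k x_{t,k} ≤ 1` and `x ∈ [0,1]^{T×K}`. -/
theorem expected_revenue_le_LP_opt
    {Ω : Type*} [MeasurableSpace Ω] (P : Measure Ω) [IsProbabilityMeasure P]
    (T K : ℕ) (hT : 0 < T) (hK : 0 < K)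
    (p : ℕ → ℝ) (hp : ∀ k ∈ Finset.Icc 1 K, 0 ≤ p k)
    (lam : ℕ → ℕ → ℝ) (hlam : ∀ t ∈ Finset.Icc 1 T, ∀ k ∈ Finset.Icc 1 K, 0 < lam t k)
    (n0 : ℝ) (hn0 : 0 < n0)
    (price : ℕ → Ω → ℕ) (hpricemeas : ∀ t, Measurable (price t))
    (hpricele : ∀ t ∈ Finset.Icc 1 T, ∀ ω, price t ω ≤ K)
    (Dt : ℕ → Ω → ℝ) (hDmeas : ∀ t, Measurable (Dt t))
    (hDnonneg : ∀ t ∈ Finset.Icc 1 T, ∀ᵐ ω ∂P, 0 ≤ Dt t ω)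
    (hinv : ∀ᵐ ω ∂P, ∑ t ∈ Finset.Icc 1 T, Dt t ω ≤ n0)
    (hshut : ∀ t ∈ Finset.Icc 1 T, ∀ᵐ ω ∂P, price t ω = 0 → Dt t ω = 0)
    (hdem : ∀ t ∈ Finset.Icc 1 T, ∀ k ∈ Finset.Icc 1 K,
      ∫ ω in {ω | price t ω = k}, Dt t ω ∂P ≤ lam t k * (P {ω | price t ω = k}).toReal) :
    ∫ ω, ∑ t ∈ Finset.Icc 1 T, ∑ k ∈ Finset.Icc 1 K,
        p k * Dt t ω * (if price t ω = k then 1 else 0) ∂P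
      ≤ sSup {v : ℝ | ∃ x : ℕ → ℕ → ℝ,
          (∀ t ∈ Finset.Icc 1 T, ∀ k ∈ Finset.Icc 1 K, x t k ∈ Set.Icc (0 : ℝ) 1) ∧
          (∑ t ∈ Finset.Icc 1 T, ∑ k ∈ Finset.Icc 1 K, x t k * lam t k ≤ n0) ∧
          (∀ t ∈ Finset.Icc 1 T, ∑ k ∈ Finset.Icc 1 K, x t k ≤ 1) ∧
          v = ∑ t ∈ Finset.Icc 1 T, ∑ k ∈ Finset.Icc 1 K, x t k * p k * lam t k} := by
  classical
  set s : ℕ → ℕ → Set Ω := fun t k => {ω | price t ω = k} with hs_def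
  have hsm : ∀ t k, MeasurableSet (s t k) := fun t k =>
    (hpricemeas t) (measurableSet_singleton k)
  -- a.e. nonnegativity for all t at once
  have hDnn : ∀ᵐ ω ∂P, ∀ t ∈ Finset.Icc 1 T, 0 ≤ Dt t ω :=
    (ae_ball_iff (Finset.Icc 1 T : Finset ℕ).countable_toSet).2 hDnonneg
  -- integrability
  have hDi : ∀ t ∈ Finset.Icc 1 T, Integrable (Dt t) P := by
    intro t ht
    refine (integrable_const n0).mono' (hDmeas t).aestronglyMeasurable ?_
    filter_upwards [hinv, hDnn] with ω h1 h2
    rw [Real.norm_eq_abs, abs_of_nonneg (h2 t ht)]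
    exact le_trans (Finset.single_le_sum (fun u hu => h2 u hu) ht) h1
  set y : ℕ → ℕ → ℝ := fun t k => ∫ ω in s t k, Dt t ω ∂P with hy_def
  have hy_nonneg : ∀ t ∈ Finset.Icc 1 T, ∀ k, 0 ≤ y t k := by
    intro t ht k
    refine setIntegral_nonneg_ae (hsm t k) ?_
    filter_upwards [hDnn] with ω h _
    exact h t ht
  -- measures toReal sum ≤ 1
  have hPle : ∀ t k, (P (s t k)).toReal ≤ 1 := by
    intro t k
    have := ENNReal.toReal_mono (measure_ne_top P Set.univ) (measure_mono (Set.subset_univ (s t k)))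
    simpa using this
  have hdisj : ∀ t, (↑(Finset.Icc 1 K) : Set ℕ).PairwiseDisjoint (s t) := by
    intro t k _ j _ hkj
    refine Set.disjoint_left.2 fun ω hk hj => hkj ?_
    exact hk.symm.trans hj
  have hPsum : ∀ t, ∑ k ∈ Finset.Icc 1 K, (P (s t k)).toReal ≤ 1 := by
    intro t
    rw [← ENNReal.toReal_sum (fun k _ => measure_ne_top P _)]
    rw [← measure_biUnion_finset (hdisj t) (fun k _ => hsm t k)]
    have := ENNReal.toReal_mono (measure_ne_top P Set.univ) (measure_mono (Set.subset_univ (⋃ b ∈ Finset.Icc 1 K, s t b)))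
    simpa using this
  -- sum over k of y is at most ∫ Dt t
  have hysum : ∀ t ∈ Finset.Icc 1 T, ∑ k ∈ Finset.Icc 1 K, y t k ≤ ∫ ω, Dt t ω ∂P := by
    intro t ht
    rw [← integral_biUnion_finset _ (fun k _ => hsm t k) (hdisj t)
      (fun k _ => ((hDi t ht).integrableOn))]
    refine setIntegral_le_integral (hDi t ht) ?_
    filter_upwards [hDnn] with ω h using h t ht
  -- the candidate LP solution
  set x : ℕ → ℕ → ℝ := fun t k => y t k / lam t k with hx_def
  have hxlam : ∀ t ∈ Finset.Icc 1 T, ∀ k ∈ Finset.Icc 1 K, x t k * lam t k = y t k := by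
    intro t ht k hk
    exact div_mul_cancel₀ _ (hlam t ht k hk).ne'
  -- rewrite the integrand as an indicator
  have hker : ∀ t k, (fun ω => p k * Dt t ω * (if price t ω = k then 1 else 0)) =
      (s t k).indicator (fun ω => p k * Dt t ω) := by
    intro t k
    funext ω
    by_cases h : price t ω = k <;> simp [Set.indicator_apply, hs_def, h]
  have hint : ∀ t ∈ Finset.Icc 1 T, ∀ k,
      Integrable (fun ω => p k * Dt t ω * (if price t ω = k then 1 else 0)) P := by
    intro t ht k
    rw [hker t k]
    exact (((hDi t ht).const_mul (p k))).indicator (hsm t k)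
  have hLHS : ∫ ω, ∑ t ∈ Finset.Icc 1 T, ∑ k ∈ Finset.Icc 1 K,
      p k * Dt t ω * (if price t ω = k then 1 else 0) ∂P
      = ∑ t ∈ Finset.Icc 1 T, ∑ k ∈ Finset.Icc 1 K, p k * y t k := by
    rw [integral_finset_sum _ (fun t ht => integrable_finset_sum _ (fun k _ => hint t ht k))]
    refine Finset.sum_congr rfl fun t ht => ?_
    rw [integral_finset_sum _ (fun k _ => hint t ht k)]
    refine Finset.sum_congr rfl fun k _ => ?_
    rw [hker t k, integral_indicator (hsm t k), integral_const_mul]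
  -- bounded above
  have hbdd : BddAbove {v : ℝ | ∃ x : ℕ → ℕ → ℝ,
          (∀ t ∈ Finset.Icc 1 T, ∀ k ∈ Finset.Icc 1 K, x t k ∈ Set.Icc (0 : ℝ) 1) ∧
          (∑ t ∈ Finset.Icc 1 T, ∑ k ∈ Finset.Icc 1 K, x t k * lam t k ≤ n0) ∧
          (∀ t ∈ Finset.Icc 1 T, ∑ k ∈ Finset.Icc 1 K, x t k ≤ 1) ∧
          v = ∑ t ∈ Finset.Icc 1 T, ∑ k ∈ Finset.Icc 1 K, x t k * p k * lam t k} := by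
    refine ⟨∑ t ∈ Finset.Icc 1 T, ∑ k ∈ Finset.Icc 1 K, p k * lam t k, ?_⟩
    rintro v ⟨z, hz01, -, -, rfl⟩
    refine Finset.sum_le_sum fun t ht => Finset.sum_le_sum fun k hk => ?_
    have h01 := hz01 t ht k hk
    have hpl : 0 ≤ p k * lam t k := mul_nonneg (hp k hk) (hlam t ht k hk).le
    calc z t k * p k * lam t k = z t k * (p k * lam t k) := by ring
      _ ≤ 1 * (p k * lam t k) := mul_le_mul_of_nonneg_right h01.2 hpl
      _ = p k * lam t k := one_mul _
  refine le_csSup hbdd ?_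
  refine ⟨x, ?_, ?_, ?_, ?_⟩
  · intro t ht k hk
    have hl := hlam t ht k hk
    constructor
    · exact div_nonneg (hy_nonneg t ht k) hl.le
    · rw [div_le_one hl]
      calc y t k ≤ lam t k * (P (s t k)).toReal := hdem t ht k hk
        _ ≤ lam t k * 1 := mul_le_mul_of_nonneg_left (hPle t k) hl.le
        _ = lam t k := mul_one _
  · -- inventory
    calc ∑ t ∈ Finset.Icc 1 T, ∑ k ∈ Finset.Icc 1 K, x t k * lam t k
        = ∑ t ∈ Finset.Icc 1 T, ∑ k ∈ Finset.Icc 1 K, y t k := by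
          refine Finset.sum_congr rfl fun t ht => Finset.sum_congr rfl fun k hk => hxlam t ht k hk
      _ ≤ ∑ t ∈ Finset.Icc 1 T, ∫ ω, Dt t ω ∂P := Finset.sum_le_sum hysum
      _ = ∫ ω, ∑ t ∈ Finset.Icc 1 T, Dt t ω ∂P := (integral_finset_sum _ (fun t ht => hDi t ht)).symm
      _ ≤ ∫ (_ : Ω), n0 ∂P := integral_mono_ae (integrable_finset_sum _ (fun t ht => hDi t ht))
            (integrable_const n0) hinv
      _ = n0 := by simp
  · -- probability constraint
    intro t ht
    refine le_trans (Finset.sum_le_sum fun k hk => ?_) (hPsum t)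
    have hl := hlam t ht k hk
    rw [div_le_iff₀ hl]
    calc y t k ≤ lam t k * (P (s t k)).toReal := hdem t ht k hk
      _ = (P (s t k)).toReal * lam t k := mul_comm _ _
  · -- objective value
    rw [hLHS]
    refine Finset.sum_congr rfl fun t ht => Finset.sum_congr rfl fun k hk => ?_
    rw [mul_comm (x t k) (p k), mul_assoc, hxlam t ht k hk]
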